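/- arXiv:1108.1776 — 3 statements merged into one kernel-verified Lean document; each statement's English description precedes it below -/
import Mathlib

section
/- Let (W,S) be a finite Coxeter system with Demazure product δ, and let Q be a word in S with δ(Q) = π. Let r be a reduced word for π⁻¹w₀ and let Q' be the concatenation of Q and r. Then δ(Q') = w₀ and the subword complexes Δ(Q,π) and Δ(Q', w₀) are isomorphic (via the natural inclusion of positions of Q into Q'). -/
open List

namespace SubwordComplex

variable {B : Type*} [DecidableEq B] [Inhabited B] {W : Type*} [Group W]
variable {M : CoxeterMatrix B} (cs : CoxeterSystem M W)

/-- The word formed by the letters of `Q` at positions not in `F`. -/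
def complement (Q : List B) (F : Finset ℕ) : List B :=
  ((Q.zipIdx.map Prod.swap).filter (fun p => p.1 ∉ F)).map Prod.snd

/-- `L` contains a reduced expression for `π` as a subword. -/
def ContainsReduced (L : List B) (π : W) : Prop :=
  ∃ L' : List B, L'.Sublist L ∧ cs.IsReduced L' ∧ cs.wordProd L' = π

/-- `F` is a face of the subword complex `Δ(Q, π)`. -/
def IsFace (Q : List B) (π : W) (F : Finset ℕ) : Prop :=
  F ⊆ Finset.range Q.length ∧ ContainsReduced cs (complement Q F) π

/-- `F` is a facet (maximal face) of the subword complex `Δ(Q, π)`. -/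
def IsFacet (Q : List B) (π : W) (F : Finset ℕ) : Prop :=
  IsFace cs Q π F ∧ ∀ F' : Finset ℕ, IsFace cs Q π F' → F ⊆ F' → F' = F

/-- `w₀` is the longest element. -/
def IsLongest (w₀ : W) : Prop := ∀ w : W, cs.length w ≤ cs.length w₀

/-- The Demazure product of a word. -/
noncomputable def demazure (Q : List B) : W :=
  Q.foldl (fun w i => if cs.length w < cs.length (w * cs.simple i) then w * cs.simple i
    else w) 1

/-- A reduced word for a Coxeter element: each generator appears exactly once. -/
def IsCoxeterWord (c : List B) : Prop := c.Nodup ∧ ∀ b : B, b ∈ c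

/-- The letter of the infinite word `c^∞` at position `i`. -/
def cInfLetter (c : List B) (i : ℕ) : B := c.getD (i % c.length) default

/-- `P` is the lexicographically first increasing list of positions in `c^∞` whose
associated word is a reduced word for `w`. -/
def IsSortingIndices (c : List B) (w : W) (P : List ℕ) : Prop :=
  P.Chain' (· < ·) ∧ cs.IsReduced (P.map (cInfLetter c)) ∧
    cs.wordProd (P.map (cInfLetter c)) = w ∧
    ∀ P' : List ℕ, P'.Chain' (· < ·) → cs.IsReduced (P'.map (cInfLetter c)) →
      cs.wordProd (P'.map (cInfLetter c)) = w → P = P' ∨ List.Lex (· < ·) P P'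

/-- `sw` is the `c`-sorting word of `w`. -/
def IsSortingWord (c : List B) (w : W) (sw : List B) : Prop :=
  ∃ P : List ℕ, IsSortingIndices cs c w P ∧ sw = P.map (cInfLetter c)

/-- One step of interchanging two adjacent commuting letters. -/
def CommStep (L L' : List B) : Prop :=
  ∃ (u v : List B) (a b : B),
    cs.simple a * cs.simple b = cs.simple b * cs.simple a ∧
    L = u ++ a :: b :: v ∧ L' = u ++ b :: a :: v

/-- Two words coincide up to commutations. -/
def CommEquiv (L L' : List B) : Prop := Relation.EqvGen (CommStep cs) L L'

/-- The (combinatorial model of the) root `w(α_s)`: a pair consisting of the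
reflection `w s w⁻¹` and a sign which is `true` if the root is positive. -/
noncomputable def rootPair (w : W) (s : B) : W × Bool :=
  (w * cs.simple s * w⁻¹, decide (cs.length w < cs.length (w * cs.simple s)))

/-- The negative of a root in the combinatorial model. -/
def negRoot (r : W × Bool) : W × Bool := (r.1, !r.2)

/-- The product of the letters of `Q \ F` occurring strictly before position `q`. -/
def prefixProd (Q : List B) (F : Finset ℕ) (q : ℕ) : W :=
  cs.wordProd (((Q.zipIdx.map Prod.swap).filter (fun p => p.1 ∉ F ∧ p.1 < q)).map Prod.snd)

/-- The root function `r_F` of a facet `F`, in the combinatorial model. -/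
noncomputable def rootF (Q : List B) (F : Finset ℕ) (q : ℕ) : W × Bool :=
  rootPair cs (prefixProd cs Q F q) (Q.getD q default)

end SubwordComplex

/-!
Every product of a subword of `Q` lies below `δ(Q)` in the Bruhat order (induction on `Q`, using
Deodhar's property Z), so reduced subwords of `Q` have length at most `ℓ(π)`. Since
`ℓ(π) + ℓ(π⁻¹w₀) = ℓ(w₀)`, each letter of `r` is an ascent of the running Demazure product, hence
`δ(Q r) = w₀`. A reduced word for `w₀` inside `Q r` has length `ℓ(π) + |r|`, so it consists of a
reduced word for `π` inside `Q` followed by all of `r`: faces of `Δ(Q r, w₀)` avoid the positions of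
`r`, and they are exactly the faces of `Δ(Q, π)`.

The exchange property behind all of this is obtained from the action of `W` on `W × ℤ/2` in which
`s` acts by `(t, a) ↦ (s t s, a + [t = s])` (Björner–Brenti, §1.3): it shows that the parity
of the number of occurrences of `t` in the right inversion sequence of a word depends only on the
product of the word.
-/

namespace CoxeterSystem

variable {B W : Type*} [Group W] {M : CoxeterMatrix B} (cs : CoxeterSystem M W)

local prefix:100 "s " => cs.simple
local prefix:100 "π " => cs.wordProd
local prefix:100 "ℓ" => cs.length
local prefix:100 "ris " => cs.rightInvSeq
local prefix:100 "lis " => cs.leftInvSeq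

theorem rightInvSeq_append (ω ω' : List B) :
    ris (ω ++ ω') = (ris ω).map (MulAut.conj (π ω')⁻¹) ++ ris ω' := by
  induction ω with
  | nil => simp
  | cons i ω ih =>
    simp only [List.cons_append, rightInvSeq, ih, List.map_cons, MulAut.conj_apply,
      wordProd_append, mul_inv_rev, inv_inv]
    group

theorem leftInvSeq_eq_map_rightInvSeq (ω : List B) :
    lis ω = (ris ω).map (MulAut.conj (π ω)) := by
  induction ω with
  | nil => simp
  | cons i ω ih =>
    simp only [leftInvSeq, rightInvSeq, ih, List.map_map, List.map_cons, wordProd_cons, map_mul]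
    simp [MulAut.conj_apply, mul_assoc, cs.inv_simple]

theorem reverse_alternatingWord (i j : B) (n : ℕ) :
    (alternatingWord i j n).reverse =
      if Even n then alternatingWord j i n else alternatingWord i j n := by
  induction n generalizing i j with
  | zero => simp [alternatingWord]
  | succ n ih =>
    have hrev : (alternatingWord i j (n + 1)).reverse = j :: (alternatingWord j i n).reverse := by
      simp [alternatingWord_succ]
    rw [hrev, ih]
    by_cases hn : Even n
    · rw [if_pos hn, if_neg (by simpa [Nat.even_add_one] using hn), alternatingWord_succ',
        if_pos hn]
    · rw [if_neg hn, if_pos (by simpa [Nat.even_add_one] using hn), alternatingWord_succ',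
        if_neg hn]

theorem leftInvSeq_alternatingWord (i j : B) (p : ℕ) :
    lis (alternatingWord i j (2 * p)) =
      (List.range (2 * p)).map fun k => π alternatingWord j i (2 * k + 1) :=
  List.ext_getElem (by simp) fun k hk _ => by
    rw [length_leftInvSeq, length_alternatingWord] at hk
    simp [getElem_leftInvSeq_alternatingWord cs i j p k hk]

theorem wordProd_alternatingWord_two_mul_eq_one (i j : B) :
    π alternatingWord i j (2 * M i j) = 1 := by
  rw [prod_alternatingWord_eq_mul_pow, if_pos (even_two_mul _), Nat.mul_div_cancel_left _ two_pos,
    simple_mul_simple_pow, one_mul]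

section SignAction

variable [DecidableEq W]

def simpleSignPerm (i : B) : Equiv.Perm (W × ZMod 2) :=
  Function.Involutive.toPerm (fun p => (s i * p.1 * s i, p.2 + if p.1 = s i then 1 else 0))
    fun ⟨t, a⟩ => by
      by_cases ht : t = s i
      · simp [ht, add_assoc, CharTwo.add_self_eq_zero]
      · simp [ht, mul_assoc, mul_eq_one_iff_eq_inv]

@[simp]
theorem simpleSignPerm_apply (i : B) (p : W × ZMod 2) :
    cs.simpleSignPerm i p = (s i * p.1 * s i, p.2 + if p.1 = s i then 1 else 0) :=
  rfl

theorem prod_map_simpleSignPerm_apply (ω : List B) (t : W) (a : ZMod 2) :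
    (ω.map cs.simpleSignPerm).prod (t, a) = (π ω * t * (π ω)⁻¹, a + (ris ω).count t) := by
  induction ω generalizing t a with
  | nil => simp
  | cons i ω ih =>
    have hiff : π ω * t * (π ω)⁻¹ = s i ↔ (π ω)⁻¹ * s i * π ω = t := by
      constructor <;> intro h <;> rw [← h] <;> group
    simp only [List.map_cons, List.prod_cons, Equiv.Perm.mul_apply, ih, simpleSignPerm_apply,
      rightInvSeq, List.count_cons, beq_iff_eq, hiff, wordProd_cons, mul_inv_rev, inv_simple,
      Prod.mk.injEq]
    constructor
    · group
    · split_ifs <;> push_cast <;> ring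

theorem prod_map_simpleSignPerm_alternatingWord (i j : B) (m : ℕ) :
    ((alternatingWord i j (2 * m)).map cs.simpleSignPerm).prod =
      (cs.simpleSignPerm i * cs.simpleSignPerm j) ^ m := by
  induction m with
  | zero => simp [alternatingWord]
  | succ m ih =>
    rw [show 2 * (m + 1) = 2 * m + 1 + 1 by ring, alternatingWord_succ', alternatingWord_succ',
      if_neg (by simp [parity_simps]), if_pos (by simp [parity_simps]), pow_succ', ← ih]
    simp [mul_assoc]

/-- The inversion sequence of the braid relation runs twice through the same `M i j` reflections. -/
theorem natCast_count_rightInvSeq_alternatingWord (i j : B) (t : W) :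
    ((ris alternatingWord i j (2 * M i j)).count t : ZMod 2) = 0 := by
  have hperiodic : ∀ k, π alternatingWord i j (2 * (M i j + k) + 1) =
      π alternatingWord i j (2 * k + 1) := by
    intro k
    simp only [prod_alternatingWord_eq_mul_pow, Nat.even_add_one, even_two, Even.mul_right,
      not_true_eq_false, if_false]
    rw [show (2 * (M i j + k) + 1) / 2 = M i j + k by omega, show (2 * k + 1) / 2 = k by omega,
      pow_add, simple_mul_simple_pow, one_mul]
  have hrev : alternatingWord i j (2 * M i j) = (alternatingWord j i (2 * M i j)).reverse := by
    rw [reverse_alternatingWord, if_pos (even_two_mul _)]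
  rw [hrev, rightInvSeq_reverse, List.count_reverse, leftInvSeq_alternatingWord, two_mul,
    List.range_add, List.map_append, List.count_append, List.map_map]
  simp only [Function.comp_def, hperiodic]
  push_cast
  exact CharTwo.add_self_eq_zero _

theorem isLiftable_simpleSignPerm : M.IsLiftable cs.simpleSignPerm := by
  intro i j
  ext ⟨t, a⟩ : 1
  rw [← prod_map_simpleSignPerm_alternatingWord, prod_map_simpleSignPerm_apply,
    natCast_count_rightInvSeq_alternatingWord, wordProd_alternatingWord_two_mul_eq_one]
  simp

theorem natCast_count_rightInvSeq_eq_of_wordProd_eq {ω ω' : List B} (h : π ω = π ω') (t : W) :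
    ((ris ω).count t : ZMod 2) = (ris ω').count t := by
  set φ := cs.lift ⟨cs.simpleSignPerm, cs.isLiftable_simpleSignPerm⟩
  have hφ : ∀ ω : List B, φ (π ω) = (ω.map cs.simpleSignPerm).prod := by
    intro ω
    rw [wordProd, map_list_prod, List.map_map]
    congr 2
    funext i
    exact cs.lift_apply_simple cs.isLiftable_simpleSignPerm i
  have := congrArg (fun f : Equiv.Perm (W × ZMod 2) => (f (t, 0)).2) (congrArg φ h)
  simpa [hφ, prod_map_simpleSignPerm_apply] using this

/-- The two halves of the palindrome contribute equally, the middle letter once. -/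
theorem natCast_count_rightInvSeq_palindrome (x : W) (i : B) (ω : List B) (hω : π ω = x) :
    ((ris (ω ++ i :: ω.reverse)).count (x * s i * x⁻¹) : ZMod 2) = 1 := by
  have hleft : x * s i * x⁻¹ = MulAut.conj (π (i :: ω.reverse))⁻¹ (s i) := by
    simp [hω, wordProd_cons, mul_assoc]
  have hright : x * s i * x⁻¹ = MulAut.conj (π ω) (s i) := by simp [hω]
  have hmid : (π ω.reverse)⁻¹ * s i * π ω.reverse = x * s i * x⁻¹ := by simp [hω]
  rw [rightInvSeq_append, List.count_append]
  nth_rewrite 1 [hleft]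
  rw [List.count_map_of_injective _ _ (MulAut.conj _).injective, rightInvSeq, hmid,
    List.count_cons_self, rightInvSeq_reverse, List.count_reverse, leftInvSeq_eq_map_rightInvSeq,
    hright, List.count_map_of_injective _ _ (MulAut.conj _).injective]
  push_cast
  rw [← add_assoc, CharTwo.add_self_eq_zero, zero_add]

end SignAction

/-- Strong exchange property. `ω` has the same product as `U ++ A ++ i :: A.reverse`, where `U` is
reduced for `π ω * t` and `t = π A * s i * (π A)⁻¹`; on the latter word `t` occurs an odd number of
times, none of them inside `U`. -/
theorem mem_rightInvSeq_of_length_mul_lt {ω : List B} {t : W} (ht : cs.IsReflection t)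
    (h : ℓ (π ω * t) < ℓ (π ω)) : t ∈ ris ω := by
  classical
  obtain ⟨U, hU, hUω⟩ := cs.exists_isReduced (π ω * t)
  obtain ⟨x, i, rfl⟩ := ht
  obtain ⟨A, rfl⟩ := cs.wordProd_surjective x
  set t := π A * s i * (π A)⁻¹
  have ht : cs.IsReflection t := ⟨π A, i, rfl⟩
  have hT : π (A ++ i :: A.reverse) = t := by
    simp [t, wordProd_append, wordProd_cons, mul_assoc]
  have hT_count : ((ris (A ++ i :: A.reverse)).count t : ZMod 2) = 1 :=
    cs.natCast_count_rightInvSeq_palindrome _ i A rfl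
  have hU_count : (ris U).count t = 0 := by
    refine List.count_eq_zero.mpr fun htU => ?_
    have := (cs.isRightInversion_of_mem_rightInvSeq hU htU).2
    rw [← hUω, mul_assoc, ht.mul_self, mul_one] at this
    omega
  have hprod : π ω = π (U ++ (A ++ i :: A.reverse)) := by
    rw [wordProd_append, ← hUω, hT, mul_assoc, ht.mul_self, mul_one]
  have hcount := cs.natCast_count_rightInvSeq_eq_of_wordProd_eq hprod t
  rw [rightInvSeq_append, List.count_append, Nat.cast_add, hT_count, hT] at hcount
  nth_rewrite 2 [show t = MulAut.conj t⁻¹ t by simp] at hcount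
  rw [List.count_map_of_injective _ _ (MulAut.conj _).injective, hU_count] at hcount
  rw [← List.count_pos_iff, Nat.pos_iff_ne_zero]
  intro h0
  rw [h0, Nat.cast_zero] at hcount
  exact zero_ne_one hcount

theorem exists_wordProd_eraseIdx_eq_mul {ω : List B} {t : W} (ht : cs.IsReflection t)
    (h : ℓ (π ω * t) < ℓ (π ω)) : ∃ j < ω.length, π (ω.eraseIdx j) = π ω * t := by
  obtain ⟨j, hj, rfl⟩ := List.getElem_of_mem (cs.mem_rightInvSeq_of_length_mul_lt ht h)
  rw [length_rightInvSeq] at hj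
  refine ⟨j, hj, ?_⟩
  rw [← wordProd_mul_getD_rightInvSeq, List.getD_eq_getElem]

theorem length_mul_lt_length_mul_simple_mul {x y : W} {i : B} (hx : ℓ x < ℓ (x * s i))
    (hy : ℓ y < ℓ (s i * y)) : ℓ (x * y) < ℓ (x * s i * y) := by
  set t := y⁻¹ * s i * y
  have ht : cs.IsReflection t := by simpa using (cs.isReflection_simple i).conj y⁻¹
  have hxyt : x * s i * y = x * y * t := by simp [t, mul_assoc]
  rw [hxyt]
  refine (lt_or_gt_of_ne (ht.length_mul_left_ne (x * y)).symm).resolve_right fun hlt => ?_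
  obtain ⟨X, hX, rfl⟩ := cs.exists_isReduced x
  obtain ⟨Y, hY, rfl⟩ := cs.exists_isReduced y
  have hXY : π (X ++ Y) = π X * π Y := wordProd_append _ _ _
  have hmem := cs.mem_rightInvSeq_of_length_mul_lt ht (hXY ▸ hlt)
  rw [rightInvSeq_append, List.mem_append, List.mem_map] at hmem
  rcases hmem with ⟨r, hr, hrt⟩ | htY
  · have hrs : r = s i := by simpa [t, mul_assoc] using hrt
    have := (cs.isRightInversion_of_mem_rightInvSeq hX (hrs ▸ hr)).2
    omega
  · have := (cs.isRightInversion_of_mem_rightInvSeq hY htY).2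
    rw [show π Y * t = s i * π Y by simp [t, ← mul_assoc]] at this
    omega

def BruhatStep (u w : W) : Prop := ∃ t, cs.IsReflection t ∧ w = u * t ∧ ℓ u < ℓ w

def BruhatLE : W → W → Prop := Relation.ReflTransGen cs.BruhatStep

theorem BruhatLE.length_le {u w : W} (h : cs.BruhatLE u w) : ℓ u ≤ ℓ w := by
  induction h with
  | refl => exact le_rfl
  | tail _ hstep ih =>
    obtain ⟨_, _, _, hlt⟩ := hstep
    omega

theorem bruhatLE_mul_simple {w : W} {i : B} (h : ℓ w < ℓ (w * s i)) :
    cs.BruhatLE w (w * s i) :=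
  .single ⟨s i, cs.isReflection_simple i, rfl, h⟩

theorem mul_simple_bruhatLE {w : W} {i : B} (h : ℓ (w * s i) < ℓ w) :
    cs.BruhatLE (w * s i) w :=
  .single ⟨s i, cs.isReflection_simple i, by simp [mul_assoc], h⟩

theorem BruhatStep.mul_simple_or {u w : W} (h : cs.BruhatStep u w) (i : B) :
    cs.BruhatLE (u * s i) w ∨ cs.BruhatLE (u * s i) (w * s i) := by
  obtain ⟨t, ht, rfl, hlt⟩ := h
  by_cases heq : u * s i = u * t
  · exact .inl (heq ▸ .refl)
  have ht' : cs.IsReflection (s i * t * s i) := by simpa using ht.conj (s i)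
  have hwt : u * t * s i = u * s i * (s i * t * s i) := by simp [mul_assoc]
  rcases lt_or_gt_of_ne (ht'.length_mul_left_ne (u * s i)).symm with hup | hdown
  · exact .inr (.single ⟨_, ht', hwt, hwt ▸ hup⟩)
  -- Now `ℓ (u * s i) = ℓ u + 1 = ℓ (u * t)`, and exchanging `s i * t * s i` in a reduced word
  -- for `u * s i` either deletes the last letter (`u * s i = u * t`) or makes `u * t` too short.
  exfalso
  rw [← hwt] at hdown
  have hu := cs.length_mul_simple u i
  have hw := cs.length_mul_simple (u * t) i
  obtain ⟨U, hU, rfl⟩ := cs.exists_isReduced u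
  have hUi : π (U ++ [i]) = π U * s i := by simp [wordProd_append]
  obtain ⟨j, hj, hje⟩ := cs.exists_wordProd_eraseIdx_eq_mul ht' (ω := U ++ [i]) (by
    rw [hUi, ← hwt]; exact hdown)
  rw [hUi, ← hwt] at hje
  rw [List.length_append, List.length_singleton] at hj
  rcases Nat.lt_succ_iff_lt_or_eq.mp hj with hj | rfl
  · rw [List.eraseIdx_append_of_lt_length hj, wordProd_append, wordProd_singleton,
      mul_left_inj] at hje
    have := cs.length_wordProd_le (U.eraseIdx j)
    rw [List.length_eraseIdx_of_lt hj, hje, ← hU] at this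
    omega
  · rw [List.eraseIdx_append_of_length_le le_rfl, Nat.sub_self,
      List.eraseIdx_cons_zero, List.append_nil] at hje
    exact heq (by nth_rewrite 1 [hje]; exact cs.simple_mul_simple_cancel_right i)

/-- Deodhar's property Z (Humphreys, *Reflection groups and Coxeter groups*, Prop. 5.9). -/
theorem BruhatLE.mul_simple_or {u w : W} (h : cs.BruhatLE u w) (i : B) :
    cs.BruhatLE (u * s i) w ∨ cs.BruhatLE (u * s i) (w * s i) := by
  induction h with
  | refl => exact .inr .refl
  | tail _ hvw ih =>
    rcases ih with huv | huv
    · exact .inl (huv.tail hvw)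
    · exact (hvw.mul_simple_or cs i).imp huv.trans huv.trans

end CoxeterSystem

namespace SubwordComplex

open CoxeterSystem

variable {B W : Type*} [Group W] {M : CoxeterMatrix B} (cs : CoxeterSystem M W)

local prefix:100 "s " => cs.simple
local prefix:100 "π " => cs.wordProd
local prefix:100 "ℓ" => cs.length

theorem demazure_append_singleton (L : List B) (i : B) :
    demazure cs (L ++ [i]) = if ℓ (demazure cs L) < ℓ (demazure cs L * s i)
      then demazure cs L * s i else demazure cs L := by
  simp only [demazure, List.foldl_append, List.foldl_cons, List.foldl_nil]
  rfl

theorem bruhatLE_demazure_append_singleton (L : List B) (i : B) :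
    cs.BruhatLE (demazure cs L) (demazure cs (L ++ [i])) ∧
      cs.BruhatLE (demazure cs L * s i) (demazure cs (L ++ [i])) := by
  rw [demazure_append_singleton]
  split_ifs with h
  · exact ⟨cs.bruhatLE_mul_simple h, .refl⟩
  · exact ⟨.refl, cs.mul_simple_bruhatLE
      (lt_of_le_of_ne (not_lt.mp h) (cs.length_mul_simple_ne _ i))⟩

theorem bruhatLE_wordProd_demazure {U Q : List B} (hU : U <+ Q) :
    cs.BruhatLE (π U) (demazure cs Q) := by
  induction Q using List.reverseRecOn generalizing U with
  | nil =>
    rw [List.sublist_nil.mp hU]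
    exact .refl
  | append_singleton L i ih =>
    obtain ⟨hle, hle'⟩ := bruhatLE_demazure_append_singleton cs L i
    obtain ⟨U₁, U₂, rfl, hU₁, hU₂⟩ := List.sublist_append_iff.mp hU
    rcases List.sublist_singleton.mp hU₂ with rfl | rfl
    · rw [List.append_nil]
      exact (ih hU₁).trans hle
    · rw [wordProd_append, wordProd_singleton]
      rcases (ih hU₁).mul_simple_or cs i with h | h
      · exact h.trans hle
      · exact h.trans hle'

theorem length_le_length_demazure {U Q : List B} (hU : U <+ Q) (hred : cs.IsReduced U) :
    U.length ≤ ℓ (demazure cs Q) :=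
  hred.eq ▸ (bruhatLE_wordProd_demazure cs hU).length_le

theorem demazure_append_of_length_mul {Q r : List B}
    (h : ℓ (demazure cs Q * π r) = ℓ (demazure cs Q) + r.length) :
    demazure cs (Q ++ r) = demazure cs Q * π r := by
  induction r using List.reverseRecOn with
  | nil => simp
  | append_singleton r i ih =>
    rw [wordProd_append, wordProd_singleton, ← mul_assoc, List.length_append,
      List.length_singleton] at h
    have hr : ℓ (demazure cs Q * π r) = ℓ (demazure cs Q) + r.length := by
      have := cs.length_mul_le (demazure cs Q) (π r)
      have := cs.length_wordProd_le r
      have := cs.length_mul_simple (demazure cs Q * π r) i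
      omega
    rw [← List.append_assoc, demazure_append_singleton, ih hr, if_pos (by omega),
      wordProd_append, wordProd_singleton, mul_assoc]

theorem length_mul_add_length_of_isLongest {w₀ : W} (hw₀ : IsLongest cs w₀) (y : W) :
    ℓ (w₀ * y) + ℓ y = ℓ w₀ := by
  obtain ⟨Y, hY, rfl⟩ := cs.exists_isReduced y
  rw [hY.eq]
  induction Y using List.reverseRecOn with
  | nil => simp
  | append_singleton Y i ih =>
    have hYi := hY.eq
    rw [wordProd_append, wordProd_singleton, List.length_append, List.length_singleton] at hYi ⊢
    have hY' : cs.IsReduced Y := by simpa using hY.take Y.length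
    specialize ih hY'
    rw [← mul_assoc]
    set z := w₀ * π Y
    suffices hz : ℓ (z * s i) < ℓ z by
      have := cs.length_mul_simple z i
      omega
    by_contra! hz
    have hzi : ℓ z < ℓ (z * s i) := lt_of_le_of_ne hz (cs.length_mul_simple_ne z i).symm
    have hY_inv : ℓ (π Y)⁻¹ < ℓ (s i * (π Y)⁻¹) := by
      rw [cs.length_inv, ← cs.inv_simple i, ← mul_inv_rev, cs.length_inv, hYi, hY'.eq]
      omega
    have hlen := cs.length_mul_lt_length_mul_simple_mul hzi hY_inv
    rw [mul_inv_cancel_right] at hlen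
    exact absurd (hw₀ _) (not_le.mpr hlen)

def complementFrom (n : ℕ) (L : List B) (F : Finset ℕ) : List B :=
  (((L.zipIdx n).map Prod.swap).filter fun p => p.1 ∉ F).map Prod.snd

theorem complement_eq_complementFrom_zero (L : List B) (F : Finset ℕ) :
    complement L F = complementFrom 0 L F :=
  rfl

theorem complementFrom_cons (n : ℕ) (a : B) (L : List B) (F : Finset ℕ) :
    complementFrom n (a :: L) F =
      if n ∈ F then complementFrom (n + 1) L F else a :: complementFrom (n + 1) L F := by
  split_ifs with h <;> simp [complementFrom, List.zipIdx_cons, h]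

theorem complementFrom_sublist (n : ℕ) (L : List B) (F : Finset ℕ) :
    complementFrom n L F <+ L := by
  induction L generalizing n with
  | nil => simp [complementFrom]
  | cons a L ih =>
    rw [complementFrom_cons]
    split_ifs
    · exact (ih _).cons a
    · exact (ih _).cons_cons a

theorem complementFrom_append (n : ℕ) (L L' : List B) (F : Finset ℕ) :
    complementFrom n (L ++ L') F =
      complementFrom n L F ++ complementFrom (n + L.length) L' F := by
  simp [complementFrom, List.zipIdx_append, List.filter_append]

theorem complementFrom_of_forall_lt {n : ℕ} {F : Finset ℕ} (hF : ∀ q ∈ F, q < n) (L : List B) :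
    complementFrom n L F = L := by
  induction L generalizing n with
  | nil => simp [complementFrom]
  | cons a L ih =>
    rw [complementFrom_cons, if_neg fun hn => (hF n hn).false,
      ih fun q hq => (hF q hq).trans n.lt_succ_self]

theorem complementFrom_sublist_eraseIdx {n q : ℕ} {F : Finset ℕ} (hq : q ∈ F) (hn : n ≤ q)
    (L : List B) : complementFrom n L F <+ L.eraseIdx (q - n) := by
  induction L generalizing n with
  | nil => simp [complementFrom]
  | cons a L ih =>
    rw [complementFrom_cons]
    rcases hn.eq_or_lt with rfl | hlt
    · rw [if_pos hq, Nat.sub_self, List.eraseIdx_cons_zero]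
      exact complementFrom_sublist _ L F
    rw [show q - n = q - (n + 1) + 1 by omega, List.eraseIdx_cons_succ]
    split_ifs
    · exact (ih hlt).cons a
    · exact (ih hlt).cons_cons a

theorem complement_append {Q : List B} {F : Finset ℕ} (hF : F ⊆ Finset.range Q.length)
    (r : List B) : complement (Q ++ r) F = complement Q F ++ r := by
  rw [complement_eq_complementFrom_zero, complementFrom_append, zero_add,
    complementFrom_of_forall_lt fun q hq => Finset.mem_range.mp (hF hq)]
  rfl

theorem complement_append_sublist_eraseIdx {Q : List B} {F : Finset ℕ} {q : ℕ} (hq : q ∈ F)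
    (hQq : Q.length ≤ q) (r : List B) :
    complement (Q ++ r) F <+ Q ++ r.eraseIdx (q - Q.length) := by
  rw [complement_eq_complementFrom_zero, complementFrom_append, zero_add]
  exact (complementFrom_sublist 0 Q F).append (complementFrom_sublist_eraseIdx hq hQq r)

theorem length_le_of_sublist_append {Q C r M : List B} (hC : C <+ Q) (hM : M <+ C ++ r)
    (hred : cs.IsReduced M) : M.length ≤ ℓ (demazure cs Q) + r.length := by
  obtain ⟨M₁, M₂, rfl, hM₁, hM₂⟩ := List.sublist_append_iff.mp hM
  have h₁ := length_le_length_demazure cs (hM₁.trans hC) (by simpa using hred.take M₁.length)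
  rw [List.length_append]
  have := hM₂.length_le
  omega

theorem exists_eq_append_of_sublist_append {Q C r M : List B} (hC : C <+ Q) (hM : M <+ C ++ r)
    (hred : cs.IsReduced M) (hlen : ℓ (demazure cs Q) + r.length ≤ M.length) :
    ∃ M₁, M₁ <+ C ∧ cs.IsReduced M₁ ∧ M = M₁ ++ r := by
  obtain ⟨M₁, M₂, rfl, hM₁, hM₂⟩ := List.sublist_append_iff.mp hM
  have hred₁ : cs.IsReduced M₁ := by simpa using hred.take M₁.length
  have h₁ := length_le_length_demazure cs (hM₁.trans hC) hred₁
  have h₂ := hM₂.length_le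
  rw [List.length_append] at hlen
  exact ⟨M₁, hM₁, hred₁, by rw [hM₂.eq_of_length (by omega)]⟩

theorem subset_range_of_isFace_append {Q r : List B}
    (hlen : ℓ (demazure cs Q * π r) = ℓ (demazure cs Q) + r.length) {F : Finset ℕ}
    (hF : IsFace cs (Q ++ r) (demazure cs Q * π r) F) : F ⊆ Finset.range Q.length := by
  obtain ⟨hFr, M, hM, hred, hMw⟩ := hF
  intro q hq
  rw [Finset.mem_range]
  by_contra! hQq
  have hqr : q - Q.length < r.length := by
    have := Finset.mem_range.mp (hFr hq)
    rw [List.length_append] at this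
    omega
  have := length_le_of_sublist_append cs (List.Sublist.refl Q)
    (hM.trans (complement_append_sublist_eraseIdx hq hQq r)) hred
  rw [List.length_eraseIdx_of_lt hqr, ← hred.eq, hMw, hlen] at this
  omega

theorem isFace_iff_isFace_append {Q r : List B}
    (hlen : ℓ (demazure cs Q * π r) = ℓ (demazure cs Q) + r.length) {F : Finset ℕ}
    (hF : F ⊆ Finset.range Q.length) :
    IsFace cs Q (demazure cs Q) F ↔ IsFace cs (Q ++ r) (demazure cs Q * π r) F := by
  have hFr : F ⊆ Finset.range (Q ++ r).length :=
    hF.trans (Finset.range_subset_range.mpr (by simp))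
  simp only [IsFace, ContainsReduced, complement_append hF, hF, hFr, true_and]
  constructor
  · rintro ⟨L, hL, hred, hLw⟩
    refine ⟨L ++ r, hL.append_right r, ?_, by rw [wordProd_append, hLw]⟩
    show ℓ (π (L ++ r)) = (L ++ r).length
    rw [wordProd_append, hLw, hlen, List.length_append, ← hred.eq, hLw]
  · rintro ⟨M, hM, hred, hMw⟩
    obtain ⟨M₁, hM₁, hred₁, rfl⟩ := exists_eq_append_of_sublist_append cs
      (complementFrom_sublist 0 Q F) hM hred (by rw [← hlen, ← hMw, hred.eq])
    rw [wordProd_append, mul_left_inj] at hMw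
    exact ⟨M₁, hM₁, hred₁, hMw⟩

end SubwordComplex

namespace SubwordComplex

variable {B : Type*} [DecidableEq B] [Inhabited B] {W : Type*} [Group W]
variable {M : CoxeterMatrix B} (cs : CoxeterSystem M W)

theorem append_reduced_word_iso (w₀ : W) (hw₀ : IsLongest cs w₀)
    (Q r : List B) (π : W) (hQ : demazure cs Q = π)
    (hr : cs.IsReduced r) (hrprod : cs.wordProd r = π⁻¹ * w₀) :
    demazure cs (Q ++ r) = w₀ ∧
    (∀ F : Finset ℕ, IsFace cs (Q ++ r) w₀ F → F ⊆ Finset.range Q.length) ∧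
    (∀ F : Finset ℕ, F ⊆ Finset.range Q.length →
      (IsFace cs Q π F ↔ IsFace cs (Q ++ r) w₀ F)) := by
  subst hQ
  obtain rfl : w₀ = demazure cs Q * cs.wordProd r := by rw [hrprod, mul_inv_cancel_left]
  have hlen := length_mul_add_length_of_isLongest cs hw₀ (cs.wordProd r)⁻¹
  rw [mul_inv_cancel_right, cs.length_inv, hr.eq] at hlen
  exact ⟨demazure_append_of_length_mul cs hlen.symm,
    fun _ => subset_range_of_isFace_append cs hlen.symm,
    fun _ => isFace_iff_isFace_append cs hlen.symm⟩

end SubwordComplex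
end

section
/- Let (W,S) be a Coxeter system, Q a word with δ(Q) = π, F a facet of Δ(Q,π), and for each position q define the root r_F(q) = w_q(α_q), where w_q is the product of the letters of Q \ F occurring strictly before position q and α_q is the simple root of the letter at q. If F and F' = (F \ {q}) ∪ {q'} are adjacent facets, then r_F(q') = ± r_F(q); more precisely, q' is the unique position not in F with r_F(q') ∈ {± r_F(q)}, with sign + if q' lies to the right of q in Q and sign − otherwise. -/
open List

/-!
Put `G = F \ {q}`. Deleting a letter from a word multiplies its product on the left by the
reflection attached to that letter; deleting `q` or `q'` from `Q \ G` gives the reduced words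
`Q \ F` and `Q \ F'` for `π`, so `q` and `q'` carry the same reflection `t` in `Q \ G`. Removing
`q` from the prefix of `q'` conjugates the reflection at `q'` by `t` when `q < q'` and changes
nothing when `q' < q`, so `r_F(q)` and `r_F(q')` share the reflection `t`.

The root `r_F(q')` is positive because `q'` is a letter of the reduced word `Q \ F`. If `q < q'`,
then `q` is a letter of the reduced word `Q \ F'` with the same prefix, so `r_F(q)` is positive
too. If `q' < q`, then `t` deletes the letter `q'` from the prefix `u` of `q`, so
`ℓ(u s_q) = ℓ(t u) < ℓ(u)` and `r_F(q)` is negative. The same sign argument shows that distinct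
letters of a reduced word carry distinct reflections, which gives uniqueness.
-/

namespace List

variable {α : Type*}

theorem Sublist.filter_mem_map_eq {β : Type*} [DecidableEq β] (f : α → β) {l l' : List α}
    (h : l' <+ l) (hn : (l.map f).Nodup) : l.filter (fun a => f a ∈ l'.map f) = l' := by
  induction h with
  | slnil => simp
  | cons a h ih =>
    rw [map_cons, nodup_cons] at hn
    rw [filter_cons_of_neg (by simpa using fun hmem => hn.1 ((h.map f).mem hmem)), ih hn.2]
  | @cons_cons l₁ l₂ a h ih =>
    rw [map_cons, nodup_cons] at hn
    rw [filter_cons_of_pos (by simp)]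
    have hc : ∀ x ∈ l₂, decide (f x ∈ map f (a :: l₁)) = decide (f x ∈ map f l₁) := by
      intro x hx
      simp only [map_cons, mem_cons, decide_eq_decide, or_iff_right_iff_imp]
      exact fun he => absurd (he ▸ mem_map_of_mem hx) hn.1
    rw [filter_congr hc, ih hn.2]

theorem Pairwise.filter_fst_lt_prefix {l : List (ℕ × α)} (hl : l.Pairwise (·.1 < ·.1)) (r : ℕ) :
    l.filter (·.1 < r) <+: l := by
  induction l with
  | nil => simp
  | cons a l ih =>
    rw [pairwise_cons] at hl
    by_cases ha : a.1 < r
    · rw [filter_cons_of_pos (by simpa using ha)]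
      exact (prefix_cons_inj a).mpr (ih hl.2)
    · rw [filter_cons_of_neg (by simpa using ha),
        filter_eq_nil_iff.mpr fun b hb => by simpa using (not_lt.mp ha).trans (hl.1 b hb).le]
      exact nil_prefix

theorem Pairwise.exists_eq_append_cons_fst {l : List (ℕ × α)} (hl : l.Pairwise (·.1 < ·.1))
    {x : ℕ × α} (hx : x ∈ l) :
    ∃ A C, l = A ++ x :: C ∧ (∀ a ∈ A, a.1 < x.1) ∧ ∀ c ∈ C, x.1 < c.1 := by
  obtain ⟨A, C, rfl⟩ := append_of_mem hx
  rw [pairwise_append, pairwise_cons] at hl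
  exact ⟨A, C, rfl, fun a ha => hl.2.2 a ha x mem_cons_self, hl.2.1.1⟩

end List

namespace CoxeterSystem

variable {B W : Type*} [Group W] {M : CoxeterMatrix B} (cs : CoxeterSystem M W)

theorem IsReduced.of_prefix {cs : CoxeterSystem M W} {ω ω' : List B} (h : ω' <+: ω)
    (hω : cs.IsReduced ω) : cs.IsReduced ω' := by
  rw [List.prefix_iff_eq_take.mp h]
  exact hω.take _

theorem conj_simple_mul_wordProd_append_cons (X Z : List B) (a : B) :
    cs.wordProd X * cs.simple a * (cs.wordProd X)⁻¹ * cs.wordProd (X ++ a :: Z)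
      = cs.wordProd (X ++ Z) := by
  simp [wordProd_append, wordProd_cons, mul_assoc]

theorem conj_simple_wordProd_append_cons (X Y : List B) (a b : B) :
    cs.wordProd (X ++ a :: Y) * cs.simple b * (cs.wordProd (X ++ a :: Y))⁻¹
      = cs.wordProd X * cs.simple a * (cs.wordProd X)⁻¹
        * (cs.wordProd (X ++ Y) * cs.simple b * (cs.wordProd (X ++ Y))⁻¹)
        * (cs.wordProd X * cs.simple a * (cs.wordProd X)⁻¹) := by
  simp only [wordProd_append, wordProd_cons, mul_inv_rev, inv_simple]
  group

theorem length_lt_length_mul_simple {X Z : List B} {a : B} (h : cs.IsReduced (X ++ a :: Z)) :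
    cs.length (cs.wordProd X) < cs.length (cs.wordProd X * cs.simple a) := by
  have h' : cs.IsReduced (X ++ [a]) := h.of_prefix (by simp)
  rw [IsReduced, wordProd_append, wordProd_singleton] at h'
  rw [h', List.length_append, List.length_singleton]
  exact Nat.lt_succ_of_le (cs.length_wordProd_le X)

theorem length_mul_simple_lt_of_conj_eq {X Y : List B} {a b : B} (h : cs.IsReduced (X ++ a :: Y))
    (ht : cs.wordProd X * cs.simple a * (cs.wordProd X)⁻¹
      = cs.wordProd (X ++ a :: Y) * cs.simple b * (cs.wordProd (X ++ a :: Y))⁻¹) :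
    cs.length (cs.wordProd (X ++ a :: Y) * cs.simple b)
      < cs.length (cs.wordProd (X ++ a :: Y)) := by
  have hdel : cs.wordProd (X ++ a :: Y) * cs.simple b = cs.wordProd (X ++ Y) := by
    rw [← conj_simple_mul_wordProd_append_cons cs X Y a, ht, inv_mul_cancel_right]
  rw [hdel, h.eq]
  calc cs.length (cs.wordProd (X ++ Y)) ≤ (X ++ Y).length := cs.length_wordProd_le _
    _ < (X ++ a :: Y).length := by simp

end CoxeterSystem

namespace SubwordComplex

section Positions

variable {α : Type*} {Q : List α} {F : Finset ℕ}

def complementPairs (Q : List α) (F : Finset ℕ) : List (ℕ × α) :=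
  (Q.zipIdx.map Prod.swap).filter (fun p => p.1 ∉ F)

def prefixWord (Q : List α) (F : Finset ℕ) (r : ℕ) : List α :=
  ((complementPairs Q F).filter (·.1 < r)).map Prod.snd

theorem map_fst_zipIdx_swap (Q : List α) :
    (Q.zipIdx.map Prod.swap).map Prod.fst = range Q.length := by
  rw [map_map, range_eq_range']
  exact zipIdx_map_snd 0 Q

theorem fst_lt_length_of_mem_zipIdx_swap {x : ℕ × α} (hx : x ∈ Q.zipIdx.map Prod.swap) :
    x.1 < Q.length := by
  have := mem_map_of_mem (f := Prod.fst) hx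
  rwa [map_fst_zipIdx_swap, mem_range] at this

theorem pairwise_complementPairs (Q : List α) (F : Finset ℕ) :
    (complementPairs Q F).Pairwise (·.1 < ·.1) := by
  have h : ((Q.zipIdx.map Prod.swap).map Prod.fst).Pairwise (· < ·) := by
    rw [map_fst_zipIdx_swap]
    exact pairwise_lt_range
  exact (pairwise_map.mp h).filter _

theorem mem_complementPairs [Inhabited α] {p : ℕ} (hp : p < Q.length) (hpF : p ∉ F) :
    (p, Q.getD p default) ∈ complementPairs Q F := by
  refine mem_filter.mpr ⟨mem_map.mpr ⟨(Q.getD p default, p), ?_, rfl⟩, by simpa using hpF⟩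
  rw [mem_zipIdx_iff_getElem?, getElem?_eq_getElem hp, getD_eq_getElem _ _ hp]

theorem complementPairs_insert (Q : List α) (F : Finset ℕ) (p : ℕ) :
    complementPairs Q (insert p F) = (complementPairs Q F).filter (·.1 ≠ p) := by
  rw [complementPairs, complementPairs, filter_filter]
  exact filter_congr fun x _ => by simp

theorem complement_eq_prefixWord_length : complement Q F = prefixWord Q F Q.length := by
  rw [prefixWord, filter_eq_self.mpr fun x hx => by
    simpa using fst_lt_length_of_mem_zipIdx_swap (mem_filter.mp hx).1]
  rfl

theorem prefixWord_prefix_complement (r : ℕ) : prefixWord Q F r <+: complement Q F :=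
  ((pairwise_complementPairs Q F).filter_fst_lt_prefix r).map _

theorem prefixWord_congr {F' : Finset ℕ} {r : ℕ} (h : ∀ p < r, (p ∈ F ↔ p ∈ F')) :
    prefixWord Q F r = prefixWord Q F' r := by
  simp only [prefixWord, complementPairs, filter_filter]
  congr 1
  exact filter_congr fun x _ => by
    by_cases hx : x.1 < r <;> simp [hx, h x.1]

theorem exists_prefixWord_eq_append_cons [Inhabited α] {p r : ℕ} (hp : p < Q.length)
    (hpF : p ∉ F) (hpr : p < r) :
    ∃ M, prefixWord Q F r = prefixWord Q F p ++ Q.getD p default :: M ∧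
      prefixWord Q (insert p F) r = prefixWord Q F p ++ M := by
  obtain ⟨A, C, hAC, hA, hC⟩ :=
    (pairwise_complementPairs Q F).exists_eq_append_cons_fst (mem_complementPairs hp hpF)
  have hAp : A.filter (·.1 < p) = A := filter_eq_self.mpr fun a ha => by simpa using hA a ha
  have hAr : A.filter (·.1 < r) = A := filter_eq_self.mpr fun a ha => by
    simpa using (hA a ha).trans hpr
  have hCp : C.filter (·.1 < p) = [] := filter_eq_nil_iff.mpr fun c hc => by
    simpa using (hC c hc).le
  have hAne : A.filter (·.1 ≠ p) = A := filter_eq_self.mpr fun a ha => by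
    simpa using (hA a ha).ne
  have hCne : C.filter (·.1 ≠ p) = C := filter_eq_self.mpr fun c hc => by
    simpa using (hC c hc).ne'
  have hpre : prefixWord Q F p = A.map Prod.snd := by
    rw [prefixWord, hAC, filter_append, filter_cons_of_neg (by simp), hAp, hCp, append_nil]
  have hins : complementPairs Q (insert p F) = A ++ C := by
    rw [complementPairs_insert, hAC, filter_append, filter_cons_of_neg (by simp), hAne, hCne]
  refine ⟨(C.filter (·.1 < r)).map Prod.snd, ?_, ?_⟩
  · rw [hpre, prefixWord, hAC, filter_append, filter_cons_of_pos (by simpa using hpr), hAr,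
      map_append, map_cons]
  · rw [hpre, prefixWord, hins, filter_append, hAr, map_append]

theorem exists_complement_eq_of_sublist {L : List α} (hF : F ⊆ Finset.range Q.length)
    (hL : L <+ complement Q F) :
    ∃ G, F ⊆ G ∧ G ⊆ Finset.range Q.length ∧ complement Q G = L := by
  obtain ⟨l, hl, rfl⟩ := sublist_map_iff.mp hL
  have hlQ : l <+ Q.zipIdx.map Prod.swap := hl.trans filter_sublist
  refine ⟨(Finset.range Q.length).filter (· ∉ l.map Prod.fst), fun i hi => ?_,
    Finset.filter_subset _ _, ?_⟩
  · refine Finset.mem_filter.mpr ⟨hF hi, fun hil => ?_⟩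
    obtain ⟨x, hx, rfl⟩ := mem_map.mp hil
    have hxF := (mem_filter.mp (hl.mem hx)).2
    simp only [decide_not, Bool.not_eq_true', decide_eq_false_iff_not] at hxF
    exact hxF hi
  · have hnodup : ((Q.zipIdx.map Prod.swap).map Prod.fst).Nodup := by
      rw [map_fst_zipIdx_swap]
      exact nodup_range
    unfold complement
    congr 1
    refine (filter_congr fun x hx => ?_).trans (hlQ.filter_mem_map_eq Prod.fst hnodup)
    have hxQ := fst_lt_length_of_mem_zipIdx_swap hx
    rw [decide_eq_decide]
    simp [hxQ]

end Positions

section Roots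

variable {B W : Type*} [Group W] {M : CoxeterMatrix B} {cs : CoxeterSystem M W}
  {Q : List B} {π : W} {F : Finset ℕ}

theorem IsFacet.isReduced_complement_and_wordProd_complement (hF : IsFacet cs Q π F) :
    cs.IsReduced (complement Q F) ∧ cs.wordProd (complement Q F) = π := by
  obtain ⟨⟨hFQ, L, hL, hred, hprod⟩, hmax⟩ := hF
  obtain ⟨G, hFG, hGQ, hG⟩ := exists_complement_eq_of_sublist hFQ hL
  have hGF : G = F := hmax G ⟨hGQ, L, hG ▸ Sublist.refl _, hred, hprod⟩ hFG
  rw [← hGF, hG]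
  exact ⟨hred, hprod⟩

variable [Inhabited B] (cs)

theorem rootF_eq (Q : List B) (F : Finset ℕ) (r : ℕ) :
    rootF cs Q F r = rootPair cs (cs.wordProd (prefixWord Q F r)) (Q.getD r default) := by
  simp only [rootF, prefixProd, prefixWord, complementPairs, filter_filter, Bool.decide_and,
    Bool.and_comm]

theorem isReflection_rootF_fst (Q : List B) (F : Finset ℕ) (r : ℕ) :
    cs.IsReflection (rootF cs Q F r).1 :=
  ⟨_, _, rfl⟩

theorem rootF_congr {F' : Finset ℕ} {r : ℕ} (h : ∀ p < r, (p ∈ F ↔ p ∈ F')) :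
    rootF cs Q F r = rootF cs Q F' r := by
  rw [rootF_eq, rootF_eq, prefixWord_congr h]

theorem rootF_fst_eq_conj {p r : ℕ} (hp : p < Q.length) (hpF : p ∉ F) (hpr : p < r) :
    (rootF cs Q F r).1
      = (rootF cs Q F p).1 * (rootF cs Q (insert p F) r).1 * (rootF cs Q F p).1 := by
  obtain ⟨N, hFr, hinsr⟩ := exists_prefixWord_eq_append_cons hp hpF hpr
  simp only [rootF_eq, rootPair, hFr, hinsr]
  exact cs.conj_simple_wordProd_append_cons _ _ _ _

theorem wordProd_complement_insert {p : ℕ} (hp : p < Q.length) (hpF : p ∉ F) :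
    cs.wordProd (complement Q (insert p F))
      = (rootF cs Q F p).1 * cs.wordProd (complement Q F) := by
  obtain ⟨N, hFr, hinsr⟩ := exists_prefixWord_eq_append_cons hp hpF hp
  rw [complement_eq_prefixWord_length, complement_eq_prefixWord_length, hFr, hinsr, rootF_eq]
  exact (cs.conj_simple_mul_wordProd_append_cons _ _ _).symm

variable {cs}

theorem rootF_snd_eq_true (hred : cs.IsReduced (complement Q F)) {r : ℕ} (hr : r < Q.length)
    (hrF : r ∉ F) : (rootF cs Q F r).2 = true := by
  obtain ⟨N, hFr, -⟩ := exists_prefixWord_eq_append_cons hr hrF hr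
  rw [complement_eq_prefixWord_length, hFr] at hred
  simpa [rootF_eq, rootPair] using cs.length_lt_length_mul_simple hred

theorem rootF_snd_eq_false_of_fst_eq (hred : cs.IsReduced (complement Q F)) {p r : ℕ}
    (hp : p < Q.length) (hpF : p ∉ F) (hpr : p < r)
    (h : (rootF cs Q F p).1 = (rootF cs Q F r).1) : (rootF cs Q F r).2 = false := by
  obtain ⟨N, hFr, -⟩ := exists_prefixWord_eq_append_cons hp hpF hpr
  have hred' := hred.of_prefix (prefixWord_prefix_complement r)
  rw [hFr] at hred'
  simp only [rootF_eq, rootPair, hFr] at h ⊢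
  exact decide_eq_false (not_lt.mpr (cs.length_mul_simple_lt_of_conj_eq hred' h).le)

theorem eq_of_rootF_fst_eq (hred : cs.IsReduced (complement Q F)) {p r : ℕ}
    (hp : p < Q.length) (hpF : p ∉ F) (hr : r < Q.length) (hrF : r ∉ F)
    (h : (rootF cs Q F p).1 = (rootF cs Q F r).1) : p = r := by
  by_contra hne
  rcases lt_or_gt_of_ne hne with hlt | hlt
  · simpa [rootF_snd_eq_true hred hr hrF] using
      rootF_snd_eq_false_of_fst_eq hred hp hpF hlt h
  · simpa [rootF_snd_eq_true hred hp hpF] using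
      rootF_snd_eq_false_of_fst_eq hred hr hrF hlt h.symm

theorem IsFacet.rootF_fst_eq_of_flip {q q' : ℕ} (hF : IsFacet cs Q π F) (hq : q ∈ F)
    (hq' : q' < Q.length) (hq'F : q' ∉ F) (hF' : IsFacet cs Q π (insert q' (F.erase q))) :
    (rootF cs Q F q').1 = (rootF cs Q F q).1 := by
  set G := F.erase q
  have hqQ : q < Q.length := Finset.mem_range.mp (hF.1.1 hq)
  have hqG : q ∉ G := Finset.notMem_erase q F
  have hq'G : q' ∉ G := fun h => hq'F (Finset.mem_of_mem_erase h)
  have hGF : insert q G = F := Finset.insert_erase hq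
  have hflip : (rootF cs Q G q').1 = (rootF cs Q G q).1 := by
    refine mul_right_cancel (b := cs.wordProd (complement Q G)) ?_
    rw [← wordProd_complement_insert cs hq' hq'G, ← wordProd_complement_insert cs hqQ hqG, hGF,
      hF.isReduced_complement_and_wordProd_complement.2,
      hF'.isReduced_complement_and_wordProd_complement.2]
  have hFq : rootF cs Q F q = rootF cs Q G q := rootF_congr cs fun p hp => by simp [G, hp.ne]
  rcases lt_or_gt_of_ne (show q ≠ q' by rintro rfl; exact hq'F hq) with h | h
  · have hconj := rootF_fst_eq_conj cs hqQ hqG h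
    rw [hGF, hflip] at hconj
    have hcancel : (rootF cs Q F q').1 * (rootF cs Q G q).1 = 1 :=
      mul_left_cancel (a := (rootF cs Q G q).1) (by rw [← mul_assoc, ← hconj, mul_one])
    rw [hFq, ← (isReflection_rootF_fst cs Q G q).inv]
    exact eq_inv_of_mul_eq_one_left hcancel
  · rw [hFq, ← hflip]
    exact congrArg Prod.fst (rootF_congr cs fun p hp => by simp [G, (hp.trans h).ne])

end Roots

variable {B : Type*} [DecidableEq B] [Inhabited B] {W : Type*} [Group W]
variable {M : CoxeterMatrix B} (cs : CoxeterSystem M W)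

theorem flip_root_characterization (Q : List B) (π : W)
    (F : Finset ℕ) (hF : IsFacet cs Q π F) (q q' : ℕ) (hq : q ∈ F)
    (hq'mem : q' ∈ Finset.range Q.length) (hq'F : q' ∉ F)
    (hF' : IsFacet cs Q π (insert q' (F.erase q))) :
    (rootF cs Q F q' = rootF cs Q F q ∨ rootF cs Q F q' = negRoot (rootF cs Q F q)) ∧
    (∀ p ∈ Finset.range Q.length, p ∉ F →
      (rootF cs Q F p = rootF cs Q F q ∨ rootF cs Q F p = negRoot (rootF cs Q F q)) →
      p = q') ∧
    (q < q' → rootF cs Q F q' = rootF cs Q F q) ∧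
    (q' < q → rootF cs Q F q' = negRoot (rootF cs Q F q)) := by
  have hqQ : q < Q.length := Finset.mem_range.mp (hF.1.1 hq)
  have hq'Q : q' < Q.length := Finset.mem_range.mp hq'mem
  have hred := hF.isReduced_complement_and_wordProd_complement.1
  have hsame := hF.rootF_fst_eq_of_flip hq hq'Q hq'F hF'
  have hq'pos := rootF_snd_eq_true hred hq'Q hq'F
  have hplus (h : q < q') : rootF cs Q F q' = rootF cs Q F q := by
    have hqF' : q ∉ insert q' (F.erase q) := by simp [h.ne]
    refine Prod.ext hsame ?_
    rw [hq'pos, rootF_congr cs (F' := insert q' (F.erase q)) fun p hp => by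
        simp [hp.ne, (hp.trans h).ne],
      rootF_snd_eq_true hF'.isReduced_complement_and_wordProd_complement.1 hqQ hqF']
  have hminus (h : q' < q) : rootF cs Q F q' = negRoot (rootF cs Q F q) :=
    Prod.ext hsame
      (by simp [negRoot, hq'pos, rootF_snd_eq_false_of_fst_eq hred hq'Q hq'F h hsame])
  refine ⟨?_, fun p hp hpF hpq => ?_, hplus, hminus⟩
  · rcases lt_or_gt_of_ne (show q ≠ q' by rintro rfl; exact hq'F hq) with h | h
    exacts [Or.inl (hplus h), Or.inr (hminus h)]
  · refine eq_of_rootF_fst_eq hred (Finset.mem_range.mp hp) hpF hq'Q hq'F ?_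
    rw [hsame]
    rcases hpq with h | h <;> simp [h, negRoot]

end SubwordComplex
end

section
/- Let (W,S) be a finite Coxeter system and c a Coxeter element with reduced word c = (c₁,…,c_n). In the subword complex Δ(c·w₀(c), w₀), if a facet F contains the position of the letter c_i (in the prefix c), then for every other position q ∈ F, the root r_F(q) lies in the parabolic root subsystem Φ_{⟨c_i⟩} spanned by the simple roots α_s with s ≠ c_i. -/
open List

/-!
Fix a set `K` of positions. Any two facets of `Δ(Q, w)` containing `K` are joined by a chain of
flips `G ∪ {q₁} ↦ G ∪ {q₂}` with `K ⊆ G`. This goes by induction on `Q`: if the last letter `a`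
has `ℓ(w s_a) < ℓ(w)` and its position is not in `K`, flip it out of both facets and recurse into
`Δ(Q', w s_a)`; otherwise the position lies in both facets and we recurse into `Δ(Q', w)`.
A flip exists because the reflection `t = r(q₁)`, for which `π(Q ∖ G) = t w`, is not a left
inversion of `π(Q ∖ G)`: so it occurs an even number of times in the left inversion sequence of
the word `Q ∖ G`, hence at a second position `q₂`. Tits' sign cocycle makes this parity depend
only on the product.

Across a flip, `t` is the root at the flipped position on both sides, and every other root is
either unchanged or conjugated by `t`. So a subgroup containing the roots outside `K` of one facet
contains those of every facet containing `K`. For `Q = c · w₀(c)` and `K = {i}`, start from the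
facet formed by the prefix `c`, whose roots are the simple reflections `c_q`.
-/

namespace SubwordComplex

variable {B : Type*} {W : Type*} [Group W] {M : CoxeterMatrix B} (cs : CoxeterSystem M W)

local prefix:100 "s" => cs.simple
local prefix:100 "π" => cs.wordProd

theorem exists_mem_ne_of_two_le_count_map {α β : Type*} [BEq β] [LawfulBEq β] {l : List α}
    (hl : l.Nodup) {f : α → β} {b : β} (h : 2 ≤ (l.map f).count b) (a : α) :
    ∃ x ∈ l, x ≠ a ∧ f x = b := by
  by_contra! hcontra
  have hsub : l.filter (fun x => f x == b) ⊆ [a] := fun x hx => by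
    simp only [mem_filter, beq_iff_eq] at hx
    exact mem_singleton.mpr (by_contra fun hxa => hcontra x hx.1 hxa hx.2)
  have := (subperm_of_subset (hl.filter _) hsub).length_le
  rw [count, countP_map, countP_eq_length_filter] at h
  change 2 ≤ (l.filter fun x => f x == b).length at h
  simp only [length_singleton] at this
  omega

section Parity

open scoped Classical

theorem simple_mul_mul_simple_eq_simple_iff (i : B) (t : W) : s i * t * s i = s i ↔ t = s i := by
  constructor
  · intro h
    simpa [mul_assoc] using congrArg (s i * · * s i) h
  · rintro rfl
    simp

-- Tits' action of `s_i` on pairs (reflection, sign): conjugation, flipping the sign at `s_i`.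
noncomputable def titsPerm (i : B) : Equiv.Perm (W × ZMod 2) :=
  Function.Involutive.toPerm (fun p => (s i * p.1 * s i, p.2 + if p.1 = s i then 1 else 0))
    fun p => by
      ext
      · simp [mul_assoc]
      · simp only [simple_mul_mul_simple_eq_simple_iff]
        split_ifs <;> simp [add_assoc, CharTwo.add_self_eq_zero]

theorem titsPerm_apply (i : B) (p : W × ZMod 2) :
    titsPerm cs i p = (s i * p.1 * s i, p.2 + if p.1 = s i then 1 else 0) := rfl

theorem prod_map_titsPerm_apply (ω : List B) (t : W) (ε : ZMod 2) :
    (ω.map (titsPerm cs)).prod ((π ω)⁻¹ * t * π ω, ε)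
      = (t, ε + (cs.leftInvSeq ω).count t) := by
  induction ω generalizing t with
  | nil => simp
  | cons i ω ih =>
    have hconj : (π (i :: ω))⁻¹ * t * π (i :: ω)
        = (π ω)⁻¹ * (s i * t * s i) * π ω := by
      simp [cs.wordProd_cons, mul_assoc]
    have hlis : (cs.leftInvSeq (i :: ω)).count t
        = (cs.leftInvSeq ω).count (s i * t * s i) + if t = s i then 1 else 0 := by
      have ht : t = MulAut.conj (s i) (s i * t * s i) := by simp [mul_assoc]
      rw [CoxeterSystem.leftInvSeq, count_cons]
      nth_rw 1 [ht]
      rw [count_map_of_injective _ _ (MulEquiv.injective _)]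
      by_cases h : t = s i <;> simp [h, Ne.symm]
    rw [map_cons, prod_cons, Equiv.Perm.mul_apply, hconj, ih, titsPerm_apply, hlis,
      simple_mul_mul_simple_eq_simple_iff]
    simp [mul_assoc, add_assoc]

theorem alternatingWord_two_mul_succ (i j : B) (p : ℕ) :
    CoxeterSystem.alternatingWord i j (2 * (p + 1))
      = i :: j :: CoxeterSystem.alternatingWord i j (2 * p) := by
  rw [show 2 * (p + 1) = 2 * p + 1 + 1 by ring, CoxeterSystem.alternatingWord_succ',
    CoxeterSystem.alternatingWord_succ']
  simp [parity_simps]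

theorem prod_map_alternatingWord_two_mul {G : Type*} [Monoid G] (f : B → G) (i j : B) (p : ℕ) :
    ((CoxeterSystem.alternatingWord i j (2 * p)).map f).prod = (f i * f j) ^ p := by
  induction p with
  | zero => simp [CoxeterSystem.alternatingWord]
  | succ p ih => rw [alternatingWord_two_mul_succ, pow_succ', ← ih]; simp [mul_assoc]

theorem even_count_leftInvSeq_braidWord_sq (i j : B) (t : W) :
    Even ((cs.leftInvSeq (CoxeterSystem.alternatingWord i j (2 * M i j))).count t) := by
  have hperiodic : cs.leftInvSeq (CoxeterSystem.alternatingWord i j (2 * M i j))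
      = (List.range (2 * M i j)).map fun k => s i * (s j * s i) ^ k := by
    refine List.ext_getElem (by simp) fun k hk _ => ?_
    rw [cs.getElem_leftInvSeq_alternatingWord i j _ k (by simpa using hk),
      CoxeterSystem.prod_alternatingWord_eq_mul_pow]
    simp [Nat.not_even_bit1, Nat.mul_add_div]
  have hshift : ((fun k => s i * (s j * s i) ^ k) ∘ fun k => M i j + k)
      = fun k => s i * (s j * s i) ^ k := by
    funext k
    simp [pow_add]
  rw [hperiodic, two_mul, List.range_add, map_append, map_map, hshift, count_append]
  exact Even.add_self _

theorem isLiftable_titsPerm : M.IsLiftable (titsPerm cs) := by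
  intro i j
  rw [← prod_map_alternatingWord_two_mul]
  ext ⟨t, ε⟩ : 1
  have hone : π (CoxeterSystem.alternatingWord i j (2 * M i j)) = 1 := by
    simp [CoxeterSystem.prod_alternatingWord_eq_mul_pow]
  have := prod_map_titsPerm_apply cs (CoxeterSystem.alternatingWord i j (2 * M i j)) t ε
  rw [hone, inv_one, one_mul, mul_one,
    (even_count_leftInvSeq_braidWord_sq cs i j t).natCast_zmod_two, add_zero] at this
  rw [this, Equiv.Perm.one_apply]

theorem count_leftInvSeq_cast_eq_of_wordProd_eq {ω ω' : List B} (h : π ω = π ω') (t : W) :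
    ((cs.leftInvSeq ω).count t : ZMod 2) = (cs.leftInvSeq ω').count t := by
  have hlift : ∀ ω : List B,
      (ω.map (titsPerm cs)).prod = cs.lift ⟨titsPerm cs, isLiftable_titsPerm cs⟩ (π ω) := by
    intro ω
    simp [CoxeterSystem.wordProd, map_list_prod, Function.comp_def]
  have : ((ω.map (titsPerm cs)).prod ((π ω)⁻¹ * t * π ω, 0)).2
      = ((ω'.map (titsPerm cs)).prod ((π ω)⁻¹ * t * π ω, 0)).2 := by
    rw [hlift, hlift, h]
  rw [prod_map_titsPerm_apply, h, prod_map_titsPerm_apply] at this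
  simpa using this

theorem two_le_count_leftInvSeq {ω : List B} {t : W} (hmem : t ∈ cs.leftInvSeq ω)
    (ht : ¬ cs.IsLeftInversion (π ω) t) : 2 ≤ (cs.leftInvSeq ω).count t := by
  obtain ⟨ω', hred, hω'⟩ := cs.exists_isReduced (π ω)
  have hnot : t ∉ cs.leftInvSeq ω' := fun h' =>
    ht (hω' ▸ cs.isLeftInversion_of_mem_leftInvSeq hred h')
  have heven : Even ((cs.leftInvSeq ω).count t) := by
    rw [← ZMod.natCast_eq_zero_iff_even, count_leftInvSeq_cast_eq_of_wordProd_eq cs hω',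
      count_eq_zero_of_not_mem hnot, Nat.cast_zero]
  obtain ⟨k, hk⟩ := heven
  have := count_pos_iff.mpr hmem
  omega

end Parity

theorem leftInvSeq_map_filter_range (g : ℕ → B) (P : ℕ → Prop) [DecidablePred P] (N : ℕ) :
    cs.leftInvSeq (((List.range N).filter fun p => P p).map g)
      = ((List.range N).filter fun p => P p).map fun q =>
          π (((List.range q).filter fun p => P p).map g) * s (g q)
            * (π (((List.range q).filter fun p => P p).map g))⁻¹ := by
  induction N with
  | zero => simp
  | succ N ih =>
    rw [range_succ, filter_append]
    by_cases h : P N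
    · simp only [filter_singleton, h, decide_true, cond_true, map_append, map_singleton]
      rw [← concat_eq_append, cs.leftInvSeq_concat, ih, concat_eq_append]
    · simp [h, ih]

section Letters

variable [Inhabited B]

def letters (Q : List B) (P : ℕ → Prop) [DecidablePred P] : List B :=
  ((List.range Q.length).filter fun p => P p).map (Q.getD · default)

variable {Q : List B} {P R : ℕ → Prop} [DecidablePred P] [DecidablePred R]

theorem zipIdx_filter_map_snd_eq_letters (Q : List B) (P : ℕ → Prop) [DecidablePred P] :
    ((Q.zipIdx.map Prod.swap).filter fun p => P p.1).map Prod.snd = letters Q P := by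
  have hzip : Q.zipIdx.map Prod.swap
      = (List.range Q.length).map fun p => (p, Q.getD p default) := by
    refine List.ext_getElem (by simp) fun k h _ => ?_
    have hk : k < Q.length := by simpa using h
    simp [List.getElem_zipIdx, List.getElem?_eq_getElem hk]
  rw [hzip, filter_map, map_map]
  rfl

theorem letters_congr (h : ∀ p < Q.length, P p ↔ R p) : letters Q P = letters Q R := by
  unfold letters
  congr 1
  exact filter_congr fun p hp => by simpa using h p (mem_range.mp hp)

theorem letters_eq_append (Q : List B) (P : ℕ → Prop) [DecidablePred P] (r : ℕ) :
    letters Q P = letters Q (fun p => P p ∧ p < r) ++ letters Q (fun p => P p ∧ p = r)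
      ++ letters Q (fun p => P p ∧ r < p) := by
  unfold letters
  rw [← map_append, ← map_append]
  congr 1
  have hsorted := (List.pairwise_lt_range (n := Q.length)).filter
  refine List.Pairwise.eq_of_mem_iff (hsorted _) ?_ fun p => ?_
  · simp only [pairwise_append, mem_filter, mem_range, decide_eq_true_eq]
    exact ⟨⟨hsorted _, hsorted _, by grind⟩, hsorted _, by grind⟩
  · simp only [mem_append, mem_filter, mem_range, decide_eq_true_eq]
    grind

theorem letters_eq_nil (h : ∀ p < Q.length, ¬ P p) : letters Q P = [] := by
  simpa [letters, filter_eq_nil_iff] using h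

theorem letters_and_eq_self {r : ℕ} (hr : r < Q.length) (hP : P r) :
    letters Q (fun p => P p ∧ p = r) = [Q.getD r default] := by
  have : (List.range Q.length).filter (fun p => P p ∧ p = r) = [r] :=
    List.Pairwise.eq_of_mem_iff (r := (· < ·)) ((List.pairwise_lt_range).filter _)
      (pairwise_singleton _ _) fun p => by
        simp only [mem_filter, mem_range, decide_eq_true_eq, mem_singleton]
        grind
  rw [letters, this, map_singleton]

theorem letters_and_lt {q : ℕ} (hq : q ≤ Q.length) :
    letters Q (fun p => P p ∧ p < q)
      = ((List.range q).filter fun p => P p).map (Q.getD · default) := by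
  unfold letters
  congr 1
  refine List.Pairwise.eq_of_mem_iff (r := (· < ·)) ((List.pairwise_lt_range).filter _)
    ((List.pairwise_lt_range).filter _) fun p => ?_
  simp only [mem_filter, mem_range, decide_eq_true_eq]
  grind

theorem letters_append_singleton (Q : List B) (a : B) (P : ℕ → Prop) [DecidablePred P] :
    letters (Q ++ [a]) P = letters Q P ++ if P Q.length then [a] else [] := by
  unfold letters
  rw [length_append, length_singleton, range_succ, filter_append, map_append]
  congr 1
  · refine map_congr_left fun p hp => ?_
    exact getD_append _ _ _ _ (mem_range.mp (mem_filter.mp hp).1)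
  · split_ifs with h <;> simp [h]

end Letters

section Facets

variable [Inhabited B] {Q : List B} {w : W} {F G : Finset ℕ}

theorem complement_eq_letters (Q : List B) (F : Finset ℕ) :
    complement Q F = letters Q (· ∉ F) :=
  zipIdx_filter_map_snd_eq_letters Q (· ∉ F)

theorem prefixProd_eq_wordProd_letters (Q : List B) (F : Finset ℕ) (q : ℕ) :
    prefixProd cs Q F q = π (letters Q fun p => p ∉ F ∧ p < q) :=
  congrArg cs.wordProd (zipIdx_filter_map_snd_eq_letters Q fun p => p ∉ F ∧ p < q)

theorem wordProd_complement (Q : List B) (F : Finset ℕ) :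
    π (complement Q F) = prefixProd cs Q F Q.length := by
  rw [complement_eq_letters, prefixProd_eq_wordProd_letters]
  exact congrArg _ (letters_congr fun p hp => by simp [hp])

theorem length_complement (hF : F ⊆ Finset.range Q.length) :
    (complement Q F).length = Q.length - F.card := by
  have : ((List.range Q.length).filter fun p => p ∉ F).length
      = ((Finset.range Q.length).filter (· ∉ F)).card := rfl
  rw [complement_eq_letters, letters, length_map, this, Finset.filter_notMem_eq_sdiff,
    Finset.card_sdiff_of_subset hF, Finset.card_range]

theorem complement_sublist_complement (Q : List B) (h : G ⊆ F) :
    (complement Q F).Sublist (complement Q G) := by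
  rw [complement_eq_letters, complement_eq_letters]
  refine (monotone_filter_right (List.range Q.length) fun p hp => ?_).map _
  simp only [decide_eq_true_eq] at hp ⊢
  exact fun hpG => hp (h hpG)

theorem exists_sublist_complement_insert {L : List B} (hL : L.Sublist (complement Q F))
    (hlt : L.length < (complement Q F).length) :
    ∃ q < Q.length, q ∉ F ∧ L.Sublist (complement Q (insert q F)) := by
  rw [complement_eq_letters] at hL hlt
  obtain ⟨l, hl, rfl⟩ := sublist_map_iff.mp hL
  obtain ⟨q, hq, hql⟩ : ∃ q ∈ (List.range Q.length).filter (· ∉ F), q ∉ l := by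
    by_contra! hall
    have := (subperm_of_subset (nodup_range.filter _) hall).length_le
    simp only [letters, length_map] at hlt
    omega
  simp only [mem_filter, mem_range, decide_eq_true_eq] at hq
  refine ⟨q, hq.1, hq.2, ?_⟩
  have hfilter : (List.range Q.length).filter (· ∉ insert q F)
      = ((List.range Q.length).filter (· ∉ F)).filter (· ≠ q) := by
    rw [filter_filter]
    exact filter_congr fun p _ => by simp
  rw [complement_eq_letters, letters, hfilter]
  have hlq : l.filter (· ≠ q) = l :=
    filter_eq_self.mpr fun p hp => by simpa using ne_of_mem_of_not_mem hp hql
  exact (hlq ▸ hl.filter (· ≠ q)).map _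

theorem isFacet_iff : IsFacet cs Q w F ↔
    F ⊆ Finset.range Q.length ∧ π (complement Q F) = w ∧
      (complement Q F).length = cs.length w := by
  constructor
  · rintro ⟨⟨hsub, L, hL, hred, rfl⟩, hmax⟩
    have hlen : L.length = (complement Q F).length := by
      by_contra hne
      obtain ⟨q, hqQ, hqF, hLq⟩ :=
        exists_sublist_complement_insert hL (lt_of_le_of_ne hL.length_le hne)
      have hface : IsFace cs Q (π L) (insert q F) :=
        ⟨Finset.insert_subset (Finset.mem_range.mpr hqQ) hsub, L, hLq, hred, rfl⟩
      exact hqF (hmax _ hface (Finset.subset_insert q F) ▸ Finset.mem_insert_self q F)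
    obtain rfl := hL.eq_of_length hlen
    exact ⟨hsub, rfl, hred.symm⟩
  · rintro ⟨hsub, hprod, hlen⟩
    have hred : cs.IsReduced (complement Q F) := by rw [CoxeterSystem.IsReduced, hprod, hlen]
    refine ⟨⟨hsub, _, Sublist.refl _, hred, hprod⟩, ?_⟩
    rintro F' ⟨hsub', L, hL, hred, rfl⟩ hFF'
    have hle := (hL.trans (complement_sublist_complement Q hFF')).length_le
    have hlen' := hL.length_le
    rw [hred.eq] at hlen
    rw [length_complement hsub] at hlen hle
    rw [length_complement hsub'] at hlen'
    have := Finset.card_le_card hsub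
    have := Finset.card_le_card hsub'
    simp only [Finset.card_range] at *
    exact (Finset.eq_of_subset_of_card_le hFF' (by omega)).symm

theorem length_complement_insert {q : ℕ} (hsub : insert q G ⊆ Finset.range Q.length)
    (hq : q ∉ G) : (complement Q (insert q G)).length + 1 = (complement Q G).length := by
  have := Finset.card_le_card hsub
  rw [Finset.card_range, Finset.card_insert_of_notMem hq] at this
  rw [length_complement hsub, length_complement ((Finset.subset_insert q G).trans hsub),
    Finset.card_insert_of_notMem hq]
  omega

-- The reflection along the root `r_F(q) = w_q(α_q)`.
def rootRefl (Q : List B) (F : Finset ℕ) (q : ℕ) : W :=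
  prefixProd cs Q F q * s (Q.getD q default) * (prefixProd cs Q F q)⁻¹

theorem rootF_fst (Q : List B) (F : Finset ℕ) (q : ℕ) :
    (rootF cs Q F q).1 = rootRefl cs Q F q := rfl

theorem rootRefl_mul_self (Q : List B) (F : Finset ℕ) (q : ℕ) :
    rootRefl cs Q F q * rootRefl cs Q F q = 1 := by
  simp [rootRefl, mul_assoc]

theorem prefixProd_insert_of_le {q r : ℕ} (h : q ≤ r) :
    prefixProd cs Q (insert r G) q = prefixProd cs Q G q := by
  simp only [prefixProd_eq_wordProd_letters]
  exact congrArg _ (letters_congr fun p _ => by grind)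

theorem rootRefl_insert_of_le {q r : ℕ} (h : q ≤ r) :
    rootRefl cs Q (insert r G) q = rootRefl cs Q G q := by
  simp only [rootRefl, prefixProd_insert_of_le cs h]

theorem prefixProd_eq_rootRefl_mul {q r : ℕ} (hrG : r ∉ G) (hrq : r < q) (hr : r < Q.length) :
    prefixProd cs Q G q = rootRefl cs Q G r * prefixProd cs Q (insert r G) q := by
  have hbelow : ∀ H : Finset ℕ, G ⊆ H → H ⊆ insert r G →
      (letters Q fun p => (p ∉ H ∧ p < q) ∧ p < r) = letters Q fun p => p ∉ G ∧ p < r :=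
    fun H hGH hHr => letters_congr fun p _ => by grind
  have habove : (letters Q fun p => (p ∉ insert r G ∧ p < q) ∧ r < p)
      = letters Q fun p => (p ∉ G ∧ p < q) ∧ r < p :=
    letters_congr fun p _ => by grind
  rw [prefixProd_eq_wordProd_letters, prefixProd_eq_wordProd_letters, rootRefl,
    prefixProd_eq_wordProd_letters, letters_eq_append Q _ r,
    letters_eq_append Q (fun p => p ∉ insert r G ∧ p < q) r,
    hbelow G le_rfl (Finset.subset_insert _ _),
    hbelow (insert r G) (Finset.subset_insert _ _) le_rfl, habove,
    letters_and_eq_self hr ⟨hrG, hrq⟩,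
    letters_eq_nil (P := fun p => (p ∉ insert r G ∧ p < q) ∧ p = r) fun p _ => by grind]
  simp [cs.wordProd_append, cs.wordProd_cons, mul_assoc]

theorem wordProd_complement_eq_rootRefl_mul {r : ℕ} (hrG : r ∉ G) (hr : r < Q.length) :
    π (complement Q G) = rootRefl cs Q G r * π (complement Q (insert r G)) := by
  simpa only [wordProd_complement] using prefixProd_eq_rootRefl_mul cs hrG hr hr

theorem IsFacet.rootRefl_eq {r : ℕ} (h : IsFacet cs Q w (insert r G)) (hrG : r ∉ G) :
    rootRefl cs Q G r = π (complement Q G) * w⁻¹ := by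
  obtain ⟨hsub, hprod, -⟩ := (isFacet_iff cs).mp h
  have hr : r < Q.length := Finset.mem_range.mp (hsub (Finset.mem_insert_self r G))
  rw [wordProd_complement_eq_rootRefl_mul cs hrG hr, hprod, mul_inv_cancel_right]

theorem leftInvSeq_complement (Q : List B) (G : Finset ℕ) :
    cs.leftInvSeq (complement Q G)
      = ((List.range Q.length).filter (· ∉ G)).map (rootRefl cs Q G) := by
  rw [complement_eq_letters, letters, leftInvSeq_map_filter_range]
  refine map_congr_left fun q hq => ?_
  have hq : q ≤ Q.length := (mem_range.mp (mem_filter.mp hq).1).le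
  simp only [rootRefl, prefixProd_eq_wordProd_letters, letters_and_lt hq]

end Facets

section Flips

variable [Inhabited B] {Q : List B} {w : W} {G : Finset ℕ}

open scoped Classical in
theorem exists_isFacet_insert_ne {q₁ : ℕ} (hq₁G : q₁ ∉ G)
    (hF : IsFacet cs Q w (insert q₁ G)) (hlt : cs.length (π (complement Q G)) < cs.length w) :
    ∃ q₂ ∉ G, q₂ ≠ q₁ ∧ IsFacet cs Q w (insert q₂ G) := by
  obtain ⟨hsub, hprod, hlen⟩ := (isFacet_iff cs).mp hF
  have hq₁ : q₁ < Q.length := Finset.mem_range.mp (hsub (Finset.mem_insert_self q₁ G))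
  have hzw : π (complement Q G) = rootRefl cs Q G q₁ * w := by
    rw [wordProd_complement_eq_rootRefl_mul cs hq₁G hq₁, hprod]
  have hmem : rootRefl cs Q G q₁ ∈ cs.leftInvSeq (complement Q G) := by
    rw [leftInvSeq_complement]
    exact mem_map_of_mem (mem_filter.mpr ⟨mem_range.mpr hq₁, by simpa using hq₁G⟩)
  have hnotinv : ¬ cs.IsLeftInversion (π (complement Q G)) (rootRefl cs Q G q₁) := by
    rintro ⟨-, hinv⟩
    rw [hzw, ← mul_assoc, rootRefl_mul_self, one_mul] at hinv
    rw [hzw] at hlt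
    omega
  have htwo := two_le_count_leftInvSeq cs hmem hnotinv
  rw [leftInvSeq_complement] at htwo
  obtain ⟨q₂, hq₂, hne, hq₂t⟩ :=
    exists_mem_ne_of_two_le_count_map (nodup_range.filter _) htwo q₁
  simp only [mem_filter, mem_range, decide_eq_true_eq] at hq₂
  have hsub₂ : insert q₂ G ⊆ Finset.range Q.length :=
    Finset.insert_subset (Finset.mem_range.mpr hq₂.1) ((Finset.subset_insert _ _).trans hsub)
  refine ⟨q₂, hq₂.2, hne, (isFacet_iff cs).mpr ⟨hsub₂, ?_, ?_⟩⟩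
  · have := wordProd_complement_eq_rootRefl_mul cs hq₂.2 hq₂.1
    rw [hq₂t, hzw] at this
    exact (mul_left_cancel this).symm
  · have h₁ := length_complement_insert hsub hq₁G
    have h₂ := length_complement_insert hsub₂ hq₂.2
    omega

end Flips

section AppendLetter

variable [Inhabited B] {Q : List B} {a : B} {w : W} {F : Finset ℕ}

theorem complement_append_singleton_of_mem (hm : Q.length ∈ F) :
    complement (Q ++ [a]) F = complement Q (F.erase Q.length) := by
  rw [complement_eq_letters, complement_eq_letters, letters_append_singleton,
    if_neg (not_not_intro hm), append_nil]
  exact letters_congr fun p hp => by simp [hp.ne]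

theorem complement_append_singleton_of_notMem (hm : Q.length ∉ F) :
    complement (Q ++ [a]) F = complement Q F ++ [a] := by
  rw [complement_eq_letters, complement_eq_letters, letters_append_singleton, if_pos hm]

theorem isFacet_append_singleton_iff_of_mem (hm : Q.length ∈ F) :
    IsFacet cs (Q ++ [a]) w F ↔ IsFacet cs Q w (F.erase Q.length) := by
  have hsub :
      F ⊆ Finset.range (Q ++ [a]).length ↔ F.erase Q.length ⊆ Finset.range Q.length := by
    simp only [Finset.subset_iff, Finset.mem_erase, Finset.mem_range, length_append,
      length_singleton]
    grind
  rw [isFacet_iff, isFacet_iff, complement_append_singleton_of_mem hm, hsub]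

theorem isFacet_append_singleton_iff_of_notMem (hm : Q.length ∉ F) :
    IsFacet cs (Q ++ [a]) w F ↔
      IsFacet cs Q (w * s a) F ∧ cs.length (w * s a) < cs.length w := by
  have hsub : F ⊆ Finset.range (Q ++ [a]).length ↔ F ⊆ Finset.range Q.length := by
    simp only [Finset.subset_iff, Finset.mem_range, length_append, length_singleton]
    grind
  have hprod : π (complement Q F ++ [a]) = w ↔ π (complement Q F) = w * s a := by
    rw [cs.wordProd_append, cs.wordProd_singleton, ← eq_mul_inv_iff_mul_eq, cs.inv_simple]
  rw [isFacet_iff, isFacet_iff, complement_append_singleton_of_notMem hm, hsub, hprod,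
    length_append, length_singleton]
  constructor
  · rintro ⟨hF, hπ, hlen⟩
    have hle := cs.length_wordProd_le (complement Q F)
    have := cs.length_mul_simple w a
    rw [hπ] at hle
    exact ⟨⟨hF, hπ, by omega⟩, by omega⟩
  · rintro ⟨⟨hF, hπ, hlen⟩, hlt⟩
    have := cs.length_mul_simple w a
    exact ⟨hF, hπ, by omega⟩

end AppendLetter

def IsFlip (Q : List B) (w : W) (K F F' : Finset ℕ) : Prop :=
  ∃ G q₁ q₂, K ⊆ G ∧ q₁ ∉ G ∧ q₂ ∉ G ∧ F = insert q₁ G ∧ F' = insert q₂ G ∧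
    IsFacet cs Q w F ∧ IsFacet cs Q w F'

section Connectivity

variable {cs} {Q : List B} {w : W} {K F F' : Finset ℕ}

theorem IsFlip.symm (h : IsFlip cs Q w K F F') : IsFlip cs Q w K F' F := by
  obtain ⟨G, q₁, q₂, hKG, hq₁, hq₂, rfl, rfl, hF, hF'⟩ := h
  exact ⟨G, q₂, q₁, hKG, hq₂, hq₁, rfl, rfl, hF', hF⟩

theorem IsFlip.mono {K' : Finset ℕ} (hK : K' ⊆ K) (h : IsFlip cs Q w K F F') :
    IsFlip cs Q w K' F F' := by
  obtain ⟨G, q₁, q₂, hKG, h⟩ := h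
  exact ⟨G, q₁, q₂, hK.trans hKG, h⟩

theorem reflTransGen_isFlip_symm (h : Relation.ReflTransGen (IsFlip cs Q w K) F F') :
    Relation.ReflTransGen (IsFlip cs Q w K) F' F :=
  have : Std.Symm (IsFlip cs Q w K) := ⟨fun _ _ => IsFlip.symm⟩
  Std.Symm.symm _ _ h

variable [Inhabited B] {a : B}

theorem IsFacet.length_notMem (hF : IsFacet cs Q w F) : Q.length ∉ F := fun hm => by
  simpa using ((isFacet_iff cs).mp hF).1 hm

theorem IsFacet.insert_length (hF : IsFacet cs Q w F) :
    IsFacet cs (Q ++ [a]) w (insert Q.length F) := by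
  rw [isFacet_append_singleton_iff_of_mem cs (Finset.mem_insert_self _ _),
    Finset.erase_insert hF.length_notMem]
  exact hF

theorem IsFlip.insert_length (h : IsFlip cs Q w K F F') :
    IsFlip cs (Q ++ [a]) w (insert Q.length K) (insert Q.length F) (insert Q.length F') := by
  obtain ⟨G, q₁, q₂, hKG, hq₁, hq₂, rfl, rfl, hF, hF'⟩ := h
  have hne : ∀ {q}, IsFacet cs Q w (insert q G) → q ∉ G → q ∉ insert Q.length G :=
    fun {q} hF hq => by
      simpa [hq] using ne_of_mem_of_not_mem (Finset.mem_insert_self q G) hF.length_notMem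
  exact ⟨insert Q.length G, q₁, q₂, Finset.insert_subset_insert _ hKG, hne hF hq₁,
    hne hF' hq₂, Finset.insert_comm _ _ _, Finset.insert_comm _ _ _, hF.insert_length,
    hF'.insert_length⟩

theorem IsFlip.append_singleton (hlt : cs.length (w * s a) < cs.length w)
    (h : IsFlip cs Q (w * s a) K F F') : IsFlip cs (Q ++ [a]) w K F F' := by
  obtain ⟨G, q₁, q₂, hKG, hq₁, hq₂, rfl, rfl, hF, hF'⟩ := h
  have hlift : ∀ {F}, IsFacet cs Q (w * s a) F → IsFacet cs (Q ++ [a]) w F := fun hF =>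
    (isFacet_append_singleton_iff_of_notMem cs hF.length_notMem).mpr ⟨hF, hlt⟩
  exact ⟨G, q₁, q₂, hKG, hq₁, hq₂, rfl, rfl, hlift hF, hlift hF'⟩

theorem exists_reflTransGen_isFlip_isFacet_append_singleton
    (hlt : cs.length (w * s a) < cs.length w) (hmK : Q.length ∉ K)
    (hF : IsFacet cs (Q ++ [a]) w F) (hKF : K ⊆ F) :
    ∃ F', Relation.ReflTransGen (IsFlip cs (Q ++ [a]) w K) F F' ∧
      IsFacet cs Q (w * s a) F' ∧ K ⊆ F' := by
  by_cases hm : Q.length ∈ F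
  · set G := F.erase Q.length
    have hmG : Q.length ∉ G := Finset.notMem_erase _ _
    have hKG : K ⊆ G := fun x hx => Finset.mem_erase.mpr ⟨ne_of_mem_of_not_mem hx hmK, hKF hx⟩
    have hFG : F = insert Q.length G := (Finset.insert_erase hm).symm
    have hprod : π (complement (Q ++ [a]) G) = w * s a := by
      rw [complement_append_singleton_of_notMem hmG, cs.wordProd_append, cs.wordProd_singleton,
        ← complement_append_singleton_of_mem hm, ((isFacet_iff cs).mp hF).2.1]
    obtain ⟨q, hqG, hqm, hfacet⟩ := exists_isFacet_insert_ne cs hmG (hFG ▸ hF) (hprod ▸ hlt)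
    have hm' : Q.length ∉ insert q G := by simp [Ne.symm hqm, hmG]
    exact ⟨insert q G, .single ⟨G, _, _, hKG, hmG, hqG, hFG, rfl, hF, hfacet⟩,
      ((isFacet_append_singleton_iff_of_notMem cs hm').mp hfacet).1,
      hKG.trans (Finset.subset_insert _ _)⟩
  · exact ⟨F, .refl, ((isFacet_append_singleton_iff_of_notMem cs hm).mp hF).1, hKF⟩

theorem reflTransGen_isFlip_of_isFacet (Q : List B) {w : W} {K F F' : Finset ℕ}
    (hF : IsFacet cs Q w F) (hF' : IsFacet cs Q w F') (hKF : K ⊆ F) (hKF' : K ⊆ F') :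
    Relation.ReflTransGen (IsFlip cs Q w K) F F' := by
  induction Q using List.reverseRecOn generalizing w K F F' with
  | nil =>
    have hempty : ∀ {F}, IsFacet cs [] w F → F = ∅ := fun hF =>
      Finset.subset_empty.mp (by simpa using ((isFacet_iff cs).mp hF).1)
    rw [hempty hF, hempty hF']
  | append_singleton Q a ih =>
    have hdescend : Q.length ∈ F → Q.length ∈ F' →
        Relation.ReflTransGen (IsFlip cs (Q ++ [a]) w K) F F' := by
      intro hm hm'
      rw [isFacet_append_singleton_iff_of_mem cs hm] at hF
      rw [isFacet_append_singleton_iff_of_mem cs hm'] at hF'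
      have := (ih hF hF' (Finset.erase_subset_erase _ hKF) (Finset.erase_subset_erase _ hKF')).lift
        (insert Q.length) fun _ _ h =>
          (h.insert_length (a := a)).mono (Finset.insert_erase_subset _ K)
      rwa [Function.onFun, Finset.insert_erase hm, Finset.insert_erase hm'] at this
    by_cases hlt : cs.length (w * s a) < cs.length w
    · by_cases hmK : Q.length ∈ K
      · exact hdescend (hKF hmK) (hKF' hmK)
      obtain ⟨G, hFG, hG, hKG⟩ :=
        exists_reflTransGen_isFlip_isFacet_append_singleton hlt hmK hF hKF
      obtain ⟨G', hFG', hG', hKG'⟩ :=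
        exists_reflTransGen_isFlip_isFacet_append_singleton hlt hmK hF' hKF'
      exact hFG.trans (((ih hG hG' hKG hKG').lift id fun _ _ h => h.append_singleton hlt).trans
        (reflTransGen_isFlip_symm hFG'))
    · have hmem : ∀ {F}, IsFacet cs (Q ++ [a]) w F → Q.length ∈ F := fun hF =>
        by_contra fun hm => hlt ((isFacet_append_singleton_iff_of_notMem cs hm).mp hF).2
      exact hdescend (hmem hF) (hmem hF')

end Connectivity

section Roots

variable [Inhabited B] {Q : List B} {w : W} {K F F' G : Finset ℕ}

theorem complement_append_range_length (c L : List B) :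
    complement (c ++ L) (Finset.range c.length) = L := by
  induction L using List.reverseRecOn with
  | nil =>
    rw [append_nil, complement_eq_letters]
    exact letters_eq_nil fun p hp => by simpa using hp
  | append_singleton L a ih =>
    rw [← append_assoc, complement_append_singleton_of_notMem (by simp), ih]

theorem isFacet_append_range_length (c : List B) {L : List B} (hL : cs.IsReduced L) :
    IsFacet cs (c ++ L) (π L) (Finset.range c.length) := by
  rw [isFacet_iff, complement_append_range_length]
  exact ⟨Finset.range_mono (by simp), rfl, hL.eq.symm⟩

theorem rootRefl_append_range_length {c : List B} (L : List B) {q : ℕ} (hq : q < c.length) :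
    rootRefl cs (c ++ L) (Finset.range c.length) q = s (c.getD q default) := by
  rw [rootRefl, prefixProd_eq_wordProd_letters,
    letters_eq_nil fun p _ h => h.1 (Finset.mem_range.mpr (h.2.trans hq)),
    getD_append _ _ _ _ hq]
  simp

theorem prefixProd_insert_mul_inv_mem_zpowers {r : ℕ} (hrG : r ∉ G) (hr : r < Q.length)
    (q : ℕ) : prefixProd cs Q (insert r G) q * (prefixProd cs Q G q)⁻¹ ∈
      Subgroup.zpowers (rootRefl cs Q G r) := by
  rcases le_or_gt q r with hqr | hrq
  · rw [prefixProd_insert_of_le cs hqr, mul_inv_cancel]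
    exact one_mem _
  · rw [prefixProd_eq_rootRefl_mul cs hrG hrq hr, mul_inv_rev, mul_inv_cancel_left]
    exact inv_mem (Subgroup.mem_zpowers _)

theorem rootRefl_eq_conj (Q : List B) (F F' : Finset ℕ) (q : ℕ) :
    rootRefl cs Q F' q = prefixProd cs Q F' q * (prefixProd cs Q F q)⁻¹ * rootRefl cs Q F q *
      (prefixProd cs Q F' q * (prefixProd cs Q F q)⁻¹)⁻¹ := by
  simp only [rootRefl]
  group

def RootReflsIn (Q : List B) (K F : Finset ℕ) (H : Subgroup W) : Prop :=
  ∀ q ∈ F, q ∉ K → rootRefl cs Q F q ∈ H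

theorem rootReflsIn_append_range_length {c : List B} (hc : c.Nodup) (L : List B) {i : ℕ}
    (hi : i < c.length) : RootReflsIn cs (c ++ L) {i} (Finset.range c.length)
      (Subgroup.closure (cs.simple '' {b | b ≠ c.getD i default})) := by
  intro q hq hqi
  rw [Finset.mem_range] at hq
  rw [rootRefl_append_range_length cs L hq]
  refine Subgroup.subset_closure ⟨_, fun h => hqi ?_, rfl⟩
  rw [getD_eq_getElem _ _ hq, getD_eq_getElem _ _ hi] at h
  exact Finset.mem_singleton.mpr (hc.getElem_inj_iff.mp h)

variable {cs} {H : Subgroup W}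

theorem IsFlip.rootReflsIn (hflip : IsFlip cs Q w K F F') (hF : RootReflsIn cs Q K F H) :
    RootReflsIn cs Q K F' H := by
  obtain ⟨G, q₁, q₂, hKG, hq₁, hq₂, rfl, rfl, hF₁, hF₂⟩ := hflip
  -- both flipped positions carry the reflection `t` with `π (complement Q G) = t * w`
  have ht : rootRefl cs Q G q₂ = rootRefl cs Q G q₁ :=
    (hF₂.rootRefl_eq cs hq₂).trans (hF₁.rootRefl_eq cs hq₁).symm
  have htH : rootRefl cs Q G q₁ ∈ H := by
    have := hF q₁ (Finset.mem_insert_self _ _) fun h => hq₁ (hKG h)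
    rwa [rootRefl_insert_of_le cs le_rfl] at this
  intro q hq hqK
  rcases Finset.mem_insert.mp hq with rfl | hqG
  · rwa [rootRefl_insert_of_le cs le_rfl, ht]
  have hlen : ∀ {r}, IsFacet cs Q w (insert r G) → r < Q.length := fun hF =>
    Finset.mem_range.mp (((isFacet_iff cs).mp hF).1 (Finset.mem_insert_self _ _))
  have hzH : Subgroup.zpowers (rootRefl cs Q G q₁) ≤ H := Subgroup.zpowers_le.mpr htH
  have h₁ := hzH (prefixProd_insert_mul_inv_mem_zpowers cs hq₁ (hlen hF₁) q)
  have h₂ := hzH (ht ▸ prefixProd_insert_mul_inv_mem_zpowers cs hq₂ (hlen hF₂) q)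
  have hconj :
      prefixProd cs Q (insert q₂ G) q * (prefixProd cs Q (insert q₁ G) q)⁻¹ ∈ H := by
    simpa [mul_assoc] using H.mul_mem h₂ (H.inv_mem h₁)
  rw [rootRefl_eq_conj cs Q (insert q₁ G)]
  exact H.mul_mem (H.mul_mem hconj (hF q (Finset.mem_insert_of_mem hqG) hqK)) (H.inv_mem hconj)

theorem rootReflsIn_of_reflTransGen_isFlip (h : Relation.ReflTransGen (IsFlip cs Q w K) F F')
    (hF : RootReflsIn cs Q K F H) : RootReflsIn cs Q K F' H := by
  induction h with
  | refl => exact hF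
  | tail _ hflip ih => exact hflip.rootReflsIn ih

end Roots

end SubwordComplex

namespace SubwordComplex

variable {B : Type*} [DecidableEq B] [Inhabited B] {W : Type*} [Group W]
variable {M : CoxeterMatrix B} (cs : CoxeterSystem M W)

theorem facet_with_prefix_letter_parabolic (w₀ : W)
    (c : List B) (hc : IsCoxeterWord c) (wc : List B) (hwc : IsSortingWord cs c w₀ wc)
    (F : Finset ℕ) (hF : IsFacet cs (c ++ wc) w₀ F)
    (i : ℕ) (hi : i < c.length) (hiF : i ∈ F)
    (q : ℕ) (hq : q ∈ F) (hne : q ≠ i) :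
    (rootF cs (c ++ wc) F q).1 ∈
      Subgroup.closure (cs.simple '' {b : B | b ≠ c.getD i default}) := by
  obtain ⟨P, ⟨-, hred, hprod, -⟩, rfl⟩ := hwc
  have hbase := hprod ▸ isFacet_append_range_length cs c hred
  have hpath := reflTransGen_isFlip_of_isFacet _ hbase hF (K := {i})
    (by simpa using hi) (by simpa using hiF)
  rw [rootF_fst]
  exact rootReflsIn_of_reflTransGen_isFlip hpath (rootReflsIn_append_range_length cs hc.1 _ hi)
    q hq (by simpa using hne)

end SubwordComplex
end
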